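/- arXiv:2603.03634 — 2 statements merged into one kernel-verified Lean document; each statement's English description precedes it below -/
import Mathlib

section
/- Let N ≥ 3. For 1 ≤ i ≤ N−2 and 1 ≤ j ≤ N−(i+1), define the real N×N matrix M_{i,i+1,i+1+j} whose (m,n) entry is 1 if (m,n) ∈ {(i, i+1), (i+1, i+1+j), (i+1+j, i)}, is −1 if (m,n) ∈ {(i+1, i), (i+1+j, i+1), (i, i+1+j)}, and is 0 otherwise. Then the family {M_{i,i+1,i+1+j} : 1 ≤ i ≤ N−2, 1 ≤ j ≤ N−(i+1)}, consisting of C(N−1,2) matrices, is a basis of the space 𝓜 of antisymmetric real N×N matrices whose rows sum to zero. -/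
/-! For `0 < b < c` (zero-based) let `φ_{b,c} A = ∑_{t < b} A c t`. The two edges at `c` of the
triangle `{b' - 1, b', c'}` carry opposite signs, and exactly one of them ends in `{t < b}` iff
`(b', c') = (b, c)`. So the `φ_{b,c}` are dual to the cycle matrices, which are therefore linearly
independent. Conversely a matrix of `𝓜` is determined by its entries `A b c` with `0 < b < c`:
by antisymmetry they determine the block away from index `0`, and the zero row sums then determine
column and row `0`. Hence `dim 𝓜 ≤ C(N-1, 2)`, and the `C(N-1, 2)` independent cycle matrices
span `𝓜`. -/

open Matrix

/-- The space `𝓜` of antisymmetric real `N×N` matrices whose rows sum to zero. -/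
def antisymmRowZero (N : ℕ) : Submodule ℝ (Matrix (Fin N) (Fin N) ℝ) where
  carrier := {A | Aᵀ = -A ∧ A.mulVec (fun _ => (1 : ℝ)) = 0}
  add_mem' := by
    rintro A B ⟨hA1, hA2⟩ ⟨hB1, hB2⟩
    exact ⟨by simp [Matrix.transpose_add, hA1, hB1, neg_add, add_comm],
      by simp [Matrix.add_mulVec, hA2, hB2]⟩
  zero_mem' := by
    exact ⟨by simp, by simp⟩
  smul_mem' := by
    rintro c A ⟨hA1, hA2⟩
    exact ⟨by simp [Matrix.transpose_smul, hA1],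
      by simp [Matrix.smul_mulVec, hA2]⟩

open Finset

variable {N : ℕ}

def edgeMatrix (a b : Fin N) : Matrix (Fin N) (Fin N) ℝ := single a b 1 - single b a 1

lemma edgeMatrix_transpose (a b : Fin N) : (edgeMatrix a b)ᵀ = -edgeMatrix a b := by
  simp [edgeMatrix, transpose_single]

lemma edgeMatrix_mulVec_one (a b : Fin N) :
    edgeMatrix a b *ᵥ (fun _ => 1) = Pi.single a 1 - Pi.single b 1 := by
  simp [edgeMatrix, sub_mulVec, single_mulVec, Pi.single]

lemma sum_Iio_single_one_apply (a b c k : Fin N) :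
    ∑ t ∈ Iio k, single a b (1 : ℝ) c t = if a = c ∧ b < k then 1 else 0 := by
  by_cases hac : a = c <;> simp [single_apply, hac]

lemma sum_Iio_edgeMatrix_apply (a b c k : Fin N) :
    ∑ t ∈ Iio k, edgeMatrix a b c t =
      (if a = c ∧ b < k then 1 else 0) - (if b = c ∧ a < k then 1 else 0) := by
  simp only [edgeMatrix, Matrix.sub_apply, Finset.sum_sub_distrib, sum_Iio_single_one_apply]

def cycleMatrix (a b c : Fin N) : Matrix (Fin N) (Fin N) ℝ :=
  edgeMatrix a b + edgeMatrix b c + edgeMatrix c a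

lemma cycleMatrix_mem_antisymmRowZero (a b c : Fin N) :
    cycleMatrix a b c ∈ antisymmRowZero N := by
  constructor
  · simp only [cycleMatrix, transpose_add, edgeMatrix_transpose]; abel
  · simp only [cycleMatrix, add_mulVec, edgeMatrix_mulVec_one]; abel

lemma eq_zero_of_mem_antisymmRowZero_of_upper_eq_zero {A : Matrix (Fin N) (Fin N) ℝ}
    (hA : A ∈ antisymmRowZero N) (h : ∀ m n : Fin N, 0 < (m : ℕ) → m < n → A m n = 0) : A = 0 := by
  obtain ⟨hskew, hrow⟩ := hA
  have skew (m n : Fin N) : A m n = -A n m := by simpa using congr_fun₂ hskew n m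
  have diag (m : Fin N) : A m m = 0 := by linarith [skew m m]
  have of_pos_pos (m n : Fin N) (hm : 0 < (m : ℕ)) (hn : 0 < (n : ℕ)) : A m n = 0 := by
    rcases lt_trichotomy m n with hmn | rfl | hmn
    · exact h m n hm hmn
    · exact diag m
    · rw [skew, h n m hn hmn, neg_zero]
  have of_row_pos (m n : Fin N) (hm : 0 < (m : ℕ)) : A m n = 0 := by
    by_cases hn : 0 < (n : ℕ)
    · exact of_pos_pos m n hm hn
    have hsum := congr_fun hrow m
    simp only [mulVec, dotProduct, mul_one, Pi.zero_apply] at hsum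
    rwa [Finset.sum_eq_single n (fun n' _ hn' => of_pos_pos m n' hm (by omega)) (by simp)] at hsum
  ext m n
  by_cases hm : 0 < (m : ℕ)
  · exact of_row_pos m n hm
  by_cases hn : 0 < (n : ℕ)
  · rw [skew, of_row_pos n m hn, neg_zero, Matrix.zero_apply]
  · rw [show m = n by omega, diag, Matrix.zero_apply]

abbrev CycleIndex (N : ℕ) :=
  {p : ℕ × ℕ // 1 ≤ p.1 ∧ p.1 ≤ N - 2 ∧ 1 ≤ p.2 ∧ p.2 ≤ N - (p.1 + 1)}

namespace CycleIndex

/- For `p = (i, j)`, the zero-based vertices `i - 1`, `i`, `i + j` of the cycle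
`(i, i+1, i+1+j)`. -/
def first (p : CycleIndex N) : Fin N := ⟨p.1.1 - 1, by omega⟩

def second (p : CycleIndex N) : Fin N := ⟨p.1.1, by omega⟩

def third (p : CycleIndex N) : Fin N := ⟨p.1.1 + p.1.2, by omega⟩

def matrix (p : CycleIndex N) : Matrix (Fin N) (Fin N) ℝ := cycleMatrix p.first p.second p.third

def equivLtPairs :
    CycleIndex N ≃ {x // x ∈ ({x ∈ Ioo 0 N ×ˢ Ioo 0 N | x.1 < x.2} : Finset (ℕ × ℕ))} where
  toFun p := ⟨(p.1.1, p.1.1 + p.1.2), by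
    simp only [mem_filter, mem_product, mem_Ioo, add_pos_iff, lt_add_iff_pos_right]
    omega⟩
  invFun x := ⟨(x.1.1, x.1.2 - x.1.1), by
    obtain ⟨x, hx⟩ := x
    simp only [mem_filter, mem_product, mem_Ioo, tsub_le_iff_right] at hx ⊢
    omega⟩
  left_inv p := by ext <;> simp
  right_inv x := by
    obtain ⟨x, hx⟩ := x
    simp only [mem_filter, mem_product, mem_Ioo] at hx
    ext <;> simp only
    omega

instance : Finite (CycleIndex N) := .of_equiv _ equivLtPairs.symm

lemma card_eq_choose_two : Nat.card (CycleIndex N) = (N - 1).choose 2 := by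
  rw [Nat.card_congr equivLtPairs, Nat.card_eq_finsetCard, card_product_filter_lt, Nat.card_Ioo,
    Nat.sub_zero]

lemma matrix_apply (p : CycleIndex N) (m n : Fin N) :
    p.matrix m n =
      if ((m : ℕ) + 1, (n : ℕ) + 1) = (p.1.1, p.1.1 + 1) ∨
         ((m : ℕ) + 1, (n : ℕ) + 1) = (p.1.1 + 1, p.1.1 + 1 + p.1.2) ∨
         ((m : ℕ) + 1, (n : ℕ) + 1) = (p.1.1 + 1 + p.1.2, p.1.1) then 1
      else if ((m : ℕ) + 1, (n : ℕ) + 1) = (p.1.1 + 1, p.1.1) ∨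
              ((m : ℕ) + 1, (n : ℕ) + 1) = (p.1.1 + 1 + p.1.2, p.1.1 + 1) ∨
              ((m : ℕ) + 1, (n : ℕ) + 1) = (p.1.1, p.1.1 + 1 + p.1.2) then -1
      else 0 := by
  obtain ⟨⟨i, j⟩, hp⟩ := p
  dsimp only at hp
  simp only [matrix, cycleMatrix, edgeMatrix, first, second, third, Matrix.add_apply,
    Matrix.sub_apply, single_apply, Fin.ext_iff, Prod.mk.injEq]
  split_ifs <;> (try norm_num) <;> omega

lemma sum_Iio_matrix_apply (p q : CycleIndex N) :
    ∑ t ∈ Iio q.second, p.matrix q.third t = if p = q then 1 else 0 := by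
  simp only [matrix, cycleMatrix, Matrix.add_apply, Finset.sum_add_distrib,
    sum_Iio_edgeMatrix_apply]
  obtain ⟨⟨i, j⟩, hp⟩ := p
  obtain ⟨⟨i', j'⟩, hq⟩ := q
  dsimp only at hp hq
  simp only [first, second, third, Fin.ext_iff, Fin.lt_def, Subtype.ext_iff, Prod.mk.injEq]
  split_ifs <;> (try norm_num) <;> omega

lemma linearIndependent_matrix :
    LinearIndependent ℝ (CycleIndex.matrix : CycleIndex N → _) := by
  classical
  let cutSums : Matrix (Fin N) (Fin N) ℝ →ₗ[ℝ] CycleIndex N → ℝ :=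
    LinearMap.pi fun q => ∑ t ∈ Iio q.second, entryLinearMap ℝ ℝ q.third t
  refine LinearIndependent.of_comp cutSums ?_
  convert Pi.linearIndependent_single_one (CycleIndex N) ℝ with p
  ext q
  simp [cutSums, sum_Iio_matrix_apply, Pi.single_apply, eq_comm]

lemma finrank_antisymmRowZero_le_card [Fintype (CycleIndex N)] :
    Module.finrank ℝ (antisymmRowZero N) ≤ Fintype.card (CycleIndex N) := by
  let coords : antisymmRowZero N →ₗ[ℝ] CycleIndex N → ℝ :=
    (LinearMap.pi fun q => entryLinearMap ℝ ℝ q.second q.third) ∘ₗ (antisymmRowZero N).subtype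
  have hinj : Function.Injective coords := by
    rw [← LinearMap.ker_eq_bot, LinearMap.ker_eq_bot']
    intro A hA
    refine Subtype.ext (eq_zero_of_mem_antisymmRowZero_of_upper_eq_zero A.2 fun m n hm hmn => ?_)
    let q : CycleIndex N := ⟨((m : ℕ), (n : ℕ) - m), by omega⟩
    have hthird : q.third = n := Fin.ext (Nat.add_sub_cancel' hmn.le)
    have hq : A.1 q.second q.third = 0 := congr_fun hA q
    rwa [hthird] at hq
  simpa using LinearMap.finrank_le_finrank_of_injective hinj

lemma span_range_matrix :
    Submodule.span ℝ (Set.range (CycleIndex.matrix : CycleIndex N → _)) = antisymmRowZero N := by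
  have := Fintype.ofFinite (CycleIndex N)
  refine Submodule.eq_of_le_of_finrank_le ?_ ?_
  · rw [Submodule.span_le]
    rintro _ ⟨p, rfl⟩
    exact cycleMatrix_mem_antisymmRowZero _ _ _
  · rw [finrank_span_eq_card linearIndependent_matrix]
    exact finrank_antisymmRowZero_le_card

end CycleIndex

open CycleIndex

theorem stmt_9_general (N : ℕ)
    (M : ℕ → ℕ → Matrix (Fin N) (Fin N) ℝ)
    (hM : ∀ i j : ℕ, 1 ≤ i → i ≤ N - 2 → 1 ≤ j → j ≤ N - (i + 1) →
      ∀ m n : Fin N,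
        M i j m n =
          if ((m : ℕ) + 1, (n : ℕ) + 1) = (i, i + 1) ∨
             ((m : ℕ) + 1, (n : ℕ) + 1) = (i + 1, i + 1 + j) ∨
             ((m : ℕ) + 1, (n : ℕ) + 1) = (i + 1 + j, i) then 1
          else if ((m : ℕ) + 1, (n : ℕ) + 1) = (i + 1, i) ∨
                  ((m : ℕ) + 1, (n : ℕ) + 1) = (i + 1 + j, i + 1) ∨
                  ((m : ℕ) + 1, (n : ℕ) + 1) = (i, i + 1 + j) then -1
          else 0) :
    LinearIndependent ℝ
      (fun p : {p : ℕ × ℕ // 1 ≤ p.1 ∧ p.1 ≤ N - 2 ∧ 1 ≤ p.2 ∧ p.2 ≤ N - (p.1 + 1)} =>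
        M p.1.1 p.1.2) ∧
    Submodule.span ℝ
      (Set.range
        (fun p : {p : ℕ × ℕ // 1 ≤ p.1 ∧ p.1 ≤ N - 2 ∧ 1 ≤ p.2 ∧ p.2 ≤ N - (p.1 + 1)} =>
          M p.1.1 p.1.2)) = antisymmRowZero N ∧
    Nat.card {p : ℕ × ℕ // 1 ≤ p.1 ∧ p.1 ≤ N - 2 ∧ 1 ≤ p.2 ∧ p.2 ≤ N - (p.1 + 1)} =
      (N - 1).choose 2 := by
  have hM_eq : (fun p : CycleIndex N => M p.1.1 p.1.2) = CycleIndex.matrix :=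
    funext fun p => Matrix.ext fun m n =>
      (hM _ _ p.2.1 p.2.2.1 p.2.2.2.1 p.2.2.2.2 m n).trans (matrix_apply p m n).symm
  rw [hM_eq]
  exact ⟨linearIndependent_matrix, span_range_matrix, card_eq_choose_two⟩

/-- The cycle matrices `M_{i,i+1,i+1+j}`, for `1 ≤ i ≤ N−2` and
`1 ≤ j ≤ N−(i+1)` (with 1-based row/column indices, zero-based index `m` corresponding to
vertex `m+1`), consist of `C(N−1,2)` matrices and form a basis (linearly independent,
spanning) of the space `𝓜` of antisymmetric real `N×N` matrices with zero row sums. -/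
theorem stmt_9 (N : ℕ) (hN : 3 ≤ N)
    (M : ℕ → ℕ → Matrix (Fin N) (Fin N) ℝ)
    (hM : ∀ i j : ℕ, 1 ≤ i → i ≤ N - 2 → 1 ≤ j → j ≤ N - (i + 1) →
      ∀ m n : Fin N,
        M i j m n =
          if ((m : ℕ) + 1, (n : ℕ) + 1) = (i, i + 1) ∨
             ((m : ℕ) + 1, (n : ℕ) + 1) = (i + 1, i + 1 + j) ∨
             ((m : ℕ) + 1, (n : ℕ) + 1) = (i + 1 + j, i) then 1
          else if ((m : ℕ) + 1, (n : ℕ) + 1) = (i + 1, i) ∨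
                  ((m : ℕ) + 1, (n : ℕ) + 1) = (i + 1 + j, i + 1) ∨
                  ((m : ℕ) + 1, (n : ℕ) + 1) = (i, i + 1 + j) then -1
          else 0) :
    LinearIndependent ℝ
      (fun p : {p : ℕ × ℕ // 1 ≤ p.1 ∧ p.1 ≤ N - 2 ∧ 1 ≤ p.2 ∧ p.2 ≤ N - (p.1 + 1)} =>
        M p.1.1 p.1.2) ∧
    Submodule.span ℝ
      (Set.range
        (fun p : {p : ℕ × ℕ // 1 ≤ p.1 ∧ p.1 ≤ N - 2 ∧ 1 ≤ p.2 ∧ p.2 ≤ N - (p.1 + 1)} =>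
          M p.1.1 p.1.2)) = antisymmRowZero N ∧
    Nat.card {p : ℕ × ℕ // 1 ≤ p.1 ∧ p.1 ≤ N - 2 ∧ 1 ≤ p.2 ∧ p.2 ≤ N - (p.1 + 1)} =
      (N - 1).choose 2 :=
  stmt_9_general N M hM
end

section
/- Let N ≥ 2, let q_{i,j} > 0 for all i ≠ j, let d ∈ ℝ, and suppose π ∈ ℝ^N satisfies π_n q_{n,n+1} − π_{n+1} q_{n+1,n} = d for all 1 ≤ n ≤ N−1, together with ∑_{n=1}^{N} π_n = 1. Then for every 2 ≤ n ≤ N, π_n = π_1 · ∏_{i=1}^{n−1} (q_{i,i+1}/q_{i+1,i}) − d · ∑_{i=1}^{n−1} (1/q_{i+1,i}) · ∏_{j=i+1}^{n−1} (q_{j,j+1}/q_{j+1,j}), and moreover π_1 = (1 + d·∑_{n=2}^{N} ∑_{i=1}^{n−1} (1/q_{i+1,i}) ∏_{j=i+1}^{n−1} (q_{j,j+1}/q_{j+1,j})) · (1 + ∑_{n=2}^{N} ∏_{i=1}^{n−1} (q_{i,i+1}/q_{i+1,i}))^{−1}. -/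
/-- If `π` satisfies the 1-non-equilibrium recursions
`π_n q_{n,n+1} − π_{n+1} q_{n+1,n} = d` for `1 ≤ n ≤ N−1` and `∑_{n=1}^N π_n = 1`,
then each `π_n` (`2 ≤ n ≤ N`) is given by the explicit formula, and `π_1` has the stated
closed form. -/
theorem stmt_14 (N : ℕ) (hN : 2 ≤ N) (q : ℕ → ℕ → ℝ)
    (hq : ∀ i j : ℕ, 1 ≤ i → i ≤ N → 1 ≤ j → j ≤ N → i ≠ j → 0 < q i j)
    (d : ℝ) (π : ℕ → ℝ)
    (hrec : ∀ n : ℕ, 1 ≤ n → n ≤ N - 1 → π n * q n (n + 1) - π (n + 1) * q (n + 1) n = d)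
    (hsum : ∑ n ∈ Finset.Icc 1 N, π n = 1) :
    (∀ n : ℕ, 2 ≤ n → n ≤ N →
      π n = π 1 * ∏ i ∈ Finset.Icc 1 (n - 1), q i (i + 1) / q (i + 1) i
          - d * ∑ i ∈ Finset.Icc 1 (n - 1),
              (1 / q (i + 1) i) * ∏ j ∈ Finset.Icc (i + 1) (n - 1), q j (j + 1) / q (j + 1) j) ∧
    π 1 = (1 + d * ∑ n ∈ Finset.Icc 2 N, ∑ i ∈ Finset.Icc 1 (n - 1),
              (1 / q (i + 1) i) * ∏ j ∈ Finset.Icc (i + 1) (n - 1), q j (j + 1) / q (j + 1) j) *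
          (1 + ∑ n ∈ Finset.Icc 2 N, ∏ i ∈ Finset.Icc 1 (n - 1), q i (i + 1) / q (i + 1) i)⁻¹ := by
  have key : ∀ n : ℕ, 2 ≤ n → n ≤ N →
      π n = π 1 * ∏ i ∈ Finset.Icc 1 (n - 1), q i (i + 1) / q (i + 1) i
          - d * ∑ i ∈ Finset.Icc 1 (n - 1),
              (1 / q (i + 1) i) * ∏ j ∈ Finset.Icc (i + 1) (n - 1), q j (j + 1) / q (j + 1) j := by
    intro n hn
    induction n, hn using Nat.le_induction with
    | base =>
      intro hle
      have h1 := hrec 1 le_rfl (by omega)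
      have hq21 : 0 < q 2 1 := hq 2 1 (by omega) (by omega) (by omega) (by omega) (by omega)
      simp only [show (2:ℕ) - 1 = 1 from rfl, Finset.Icc_self, Finset.prod_singleton,
        Finset.sum_singleton, show Finset.Icc 2 1 = ∅ from rfl, Finset.prod_empty, mul_one]
      field_simp
      linarith
    | succ n hn ih =>
      intro hle
      obtain ⟨m, rfl⟩ : ∃ m, n = m + 2 := ⟨n - 2, by omega⟩
      have ih' := ih (by omega)
      have h1 := hrec (m + 2) (by omega) (by omega)
      have hqpos : 0 < q (m + 3) (m + 2) :=
        hq (m + 3) (m + 2) (by omega) (by omega) (by omega) (by omega) (by omega)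
      simp only [show m + 2 + 1 - 1 = m + 2 from rfl, show m + 2 - 1 = m + 1 from rfl] at *
      rw [Finset.prod_Icc_succ_top (by omega : 1 ≤ m + 2),
        Finset.sum_Icc_succ_top (by omega : 1 ≤ m + 2)]
      have hsplit : ∀ i ∈ Finset.Icc 1 (m + 1),
          (1 / q (i + 1) i) * ∏ j ∈ Finset.Icc (i + 1) (m + 2), q j (j + 1) / q (j + 1) j
          = ((1 / q (i + 1) i) * ∏ j ∈ Finset.Icc (i + 1) (m + 1), q j (j + 1) / q (j + 1) j)
            * (q (m + 2) (m + 3) / q (m + 3) (m + 2)) := by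
        intro i hi
        simp only [Finset.mem_Icc] at hi
        rw [Finset.prod_Icc_succ_top (by omega : i + 1 ≤ m + 2)]
        ring
      rw [Finset.sum_congr rfl hsplit, ← Finset.sum_mul]
      have hemp : Finset.Icc (m + 2 + 1) (m + 2) = ∅ := by
        apply Finset.Icc_eq_empty; omega
      rw [hemp, Finset.prod_empty, mul_one]
      rw [ih'] at h1
      have hQ : q (m + 3) (m + 2) ≠ 0 := ne_of_gt hqpos
      have h2 : π (m + 2 + 1) =
          ((π 1 * ∏ x ∈ Finset.Icc 1 (m + 1), q x (x + 1) / q (x + 1) x -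
            d * ∑ x ∈ Finset.Icc 1 (m + 1), 1 / q (x + 1) x *
              ∏ j ∈ Finset.Icc (x + 1) (m + 1), q j (j + 1) / q (j + 1) j) * q (m + 2) (m + 2 + 1)
            - d) * (q (m + 2 + 1) (m + 2))⁻¹ := by
        rw [eq_mul_inv_iff_mul_eq₀ (by exact_mod_cast hQ)]
        linarith
      rw [h2]
      ring
  refine ⟨key, ?_⟩
  have hA : 0 ≤ ∑ n ∈ Finset.Icc 2 N, ∏ i ∈ Finset.Icc 1 (n - 1), q i (i + 1) / q (i + 1) i := by
    apply Finset.sum_nonneg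
    intro n hn
    simp only [Finset.mem_Icc] at hn
    apply Finset.prod_nonneg
    intro i hi
    simp only [Finset.mem_Icc] at hi
    have h1 : 0 < q i (i + 1) := hq i (i + 1) (by omega) (by omega) (by omega) (by omega) (by omega)
    have h2 : 0 < q (i + 1) i := hq (i + 1) i (by omega) (by omega) (by omega) (by omega) (by omega)
    positivity
  have hden : (0:ℝ) < 1 + ∑ n ∈ Finset.Icc 2 N, ∏ i ∈ Finset.Icc 1 (n - 1),
      q i (i + 1) / q (i + 1) i := by linarith
  have hsplit : Finset.Icc 1 N = insert 1 (Finset.Icc 2 N) := by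
    ext x
    simp only [Finset.mem_Icc, Finset.mem_insert]
    omega
  rw [hsplit, Finset.sum_insert (by simp)] at hsum
  have hsum2 : ∑ n ∈ Finset.Icc 2 N, π n
      = π 1 * ∑ n ∈ Finset.Icc 2 N, ∏ i ∈ Finset.Icc 1 (n - 1), q i (i + 1) / q (i + 1) i
        - d * ∑ n ∈ Finset.Icc 2 N, ∑ i ∈ Finset.Icc 1 (n - 1),
            (1 / q (i + 1) i) * ∏ j ∈ Finset.Icc (i + 1) (n - 1), q j (j + 1) / q (j + 1) j := by
    rw [Finset.mul_sum, Finset.mul_sum, ← Finset.sum_sub_distrib]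
    apply Finset.sum_congr rfl
    intro n hn
    simp only [Finset.mem_Icc] at hn
    exact key n hn.1 hn.2
  rw [hsum2] at hsum
  rw [eq_mul_inv_iff_mul_eq₀ (ne_of_gt hden)]
  linear_combination hsum
end
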